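/- The bbuo-dual X~_bbuo is an order ideal of the order dual X~ contained in the order continuous dual X~_n, for any vector lattice X whose order dual separates points. -/

import Mathlib

/-!
Closure of the bbuo-dual under `0`, `+` and scalars is immediate. Solidity reduces to the fact
that a net dominated in modulus by a bbuo-null net is again bbuo-null. Only the bidual bound
needs work: if `b ≤ x̂ ≤ t` in `X~~`, then `|x|^ ≤ t⁺ + (-b)⁺`. Positive parts exist in `X~~` by
the Riesz–Kantorovich formula `t⁺ φ = sup {t ψ | 0 ≤ ψ ≤ φ}`, because `X~` inherits the Riesz
decomposition property from `X` through the same formula one level down. The estimate itself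
uses `φ x⁺ = ψ x` for some `0 ≤ ψ ≤ φ`, a Hahn–Banach argument. Order continuity comes from
viewing a set `D ↓ 0` as a net indexed by itself: it is uo-null, and `0 ≤ d̂ ≤ d̂₀` eventually.
-/

set_option linter.unusedSectionVars false
set_option maxHeartbeats 1000000

open Filter Set

section ODual

variable (E : Type*) [AddCommGroup E] [Preorder E] [Module ℝ E]

/-- The order (bounded) dual: linear functionals bounded on order intervals. -/
noncomputable def obDual : Submodule ℝ (E →ₗ[ℝ] ℝ) where
  carrier := {f | ∀ w : E, ∃ M : ℝ, ∀ x : E, -w ≤ x → x ≤ w → |f x| ≤ M}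
  zero_mem' := fun w => ⟨0, fun x _ _ => by simp⟩
  add_mem' := fun {f g} hf hg w => by
    obtain ⟨M, hM⟩ := hf w
    obtain ⟨N, hN⟩ := hg w
    refine ⟨M + N, fun x h1 h2 => ?_⟩
    calc |(f + g) x| = |f x + g x| := by simp
    _ ≤ |f x| + |g x| := abs_add_le _ _
    _ ≤ M + N := add_le_add (hM x h1 h2) (hN x h1 h2)
  smul_mem' := fun c f hf => by
    intro w
    obtain ⟨M, hM⟩ := hf w
    refine ⟨|c| * M, fun x h1 h2 => ?_⟩
    calc |(c • f) x| = |c| * |f x| := by simp [abs_mul]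
    _ ≤ |c| * M := mul_le_mul_of_nonneg_left (hM x h1 h2) (abs_nonneg c)

/-- The pointwise-on-positive-elements (pre)order on a space of functionals. -/
instance instSubPre (Y : Submodule ℝ (E →ₗ[ℝ] ℝ)) : Preorder Y where
  le f g := ∀ x : E, 0 ≤ x → (f : E →ₗ[ℝ] ℝ) x ≤ (g : E →ₗ[ℝ] ℝ) x
  le_refl f x _ := le_rfl
  le_trans f g h h1 h2 x hx := (h1 x hx).trans (h2 x hx)

variable {E}

theorem subPre_le_iff {Y : Submodule ℝ (E →ₗ[ℝ] ℝ)} {f g : Y} :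
    f ≤ g ↔ ∀ x : E, 0 ≤ x → (f : E →ₗ[ℝ] ℝ) x ≤ (g : E →ₗ[ℝ] ℝ) x := Iff.rfl

/-- Order convergence of a net to a limit (sandwich form: eventually
`l - d ≤ x_α ≤ l + d` for every `d` in a set directed downward to `0`). -/
def OConvTo {ι : Type*} [Preorder ι] (x : ι → E) (l : E) : Prop :=
  ∃ D : Set E, D.Nonempty ∧ DirectedOn (· ≥ ·) D ∧ IsGLB D 0 ∧
    ∀ d ∈ D, ∃ α₀ : ι, ∀ α, α₀ ≤ α → l - d ≤ x α ∧ x α ≤ l + d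

/-- Order continuity of a linear functional: `f(x_α) → 0` whenever `x_α ↓ 0`. -/
def OrdContE (f : E →ₗ[ℝ] ℝ) : Prop :=
  ∀ D : Set E, D.Nonempty → DirectedOn (· ≥ ·) D → IsGLB D 0 →
    ∀ ε : ℝ, 0 < ε → ∃ d ∈ D, ∀ e ∈ D, e ≤ d → |f e| < ε

end ODual

section VL

variable (X : Type*) [Lattice X] [AddCommGroup X]
  [CovariantClass X X (· + ·) (· ≤ ·)] [Module ℝ X] [PosSMulMono ℝ X]

variable {X} in
/-- Unbounded order convergence: `|x_α - l| ⊓ u →o 0` for every `u ≥ 0`. -/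
def uoConvTo {ι : Type*} [Preorder ι] (x : ι → X) (l : X) : Prop :=
  ∀ u : X, 0 ≤ u → OConvTo (fun α => |x α - l| ⊓ u) (0 : X)

/-- The canonical evaluation of `x ∈ X` on a space `Y` of functionals on `X`. -/
def hatFun (Y : Submodule ℝ (X →ₗ[ℝ] ℝ)) (x : X) : Y →ₗ[ℝ] ℝ where
  toFun f := (f : X →ₗ[ℝ] ℝ) x
  map_add' f g := by simp
  map_smul' c f := by simp

theorem hatFun_mem (Y : Submodule ℝ (X →ₗ[ℝ] ℝ)) (x : X) :
    hatFun X Y x ∈ obDual Y := by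
  intro w
  refine ⟨(w : X →ₗ[ℝ] ℝ) (x⁺) + (w : X →ₗ[ℝ] ℝ) (x⁻), fun f h1 h2 => ?_⟩
  have hp : (0 : X) ≤ x⁺ := posPart_nonneg x
  have hn : (0 : X) ≤ x⁻ := negPart_nonneg x
  have e1 := (subPre_le_iff.mp h1) _ hp
  have e2 := (subPre_le_iff.mp h2) _ hp
  have e3 := (subPre_le_iff.mp h1) _ hn
  have e4 := (subPre_le_iff.mp h2) _ hn
  have c1 : -((w : X →ₗ[ℝ] ℝ) (x⁺)) ≤ (f : X →ₗ[ℝ] ℝ) (x⁺) := by simpa using e1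
  have c3 : -((w : X →ₗ[ℝ] ℝ) (x⁻)) ≤ (f : X →ₗ[ℝ] ℝ) (x⁻) := by simpa using e3
  have key : (f : X →ₗ[ℝ] ℝ) x
      = (f : X →ₗ[ℝ] ℝ) (x⁺) - (f : X →ₗ[ℝ] ℝ) (x⁻) := by
    rw [← map_sub, posPart_sub_negPart]
  show |(f : X →ₗ[ℝ] ℝ) x| ≤ _
  rw [key]
  have a1 : |(f : X →ₗ[ℝ] ℝ) (x⁺)| ≤ (w : X →ₗ[ℝ] ℝ) (x⁺) := abs_le.mpr ⟨c1, e2⟩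
  have a2 : |(f : X →ₗ[ℝ] ℝ) (x⁻)| ≤ (w : X →ₗ[ℝ] ℝ) (x⁻) := abs_le.mpr ⟨c3, e4⟩
  have := abs_sub ((f : X →ₗ[ℝ] ℝ) (x⁺)) ((f : X →ₗ[ℝ] ℝ) (x⁻))
  linarith

/-- The canonical embedding of `X` into the order dual of `Y ⊆ X~`. -/
def hatEl (Y : Submodule ℝ (X →ₗ[ℝ] ℝ)) (x : X) : obDual Y :=
  ⟨hatFun X Y x, hatFun_mem X Y x⟩

/-- `X~` separates the points of `X`. -/
def SepPoints : Prop := ∀ x : X, x ≠ 0 → ∃ f : obDual X, (f : X →ₗ[ℝ] ℝ) x ≠ 0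

/-- The canonical image of `X` in `X~~` is a regular sublattice:
`x_α ↓ 0` in `X` implies `x̂_α ↓ 0` in `X~~`. -/
def HatRegular : Prop :=
  ∀ D : Set X, D.Nonempty → DirectedOn (· ≥ ·) D → IsGLB D 0 →
    @IsGLB _ (instSubPre _ _).toLE (hatEl X (obDual X) '' D) (0 : obDual ↥(obDual X))

variable {X} in
/-- The net `x̂_α` is eventually order bounded in `X~~`. -/
def HatEvOB {ι : Type*} [Preorder ι] (x : ι → X) : Prop :=
  ∃ (b t : obDual ↥(obDual X)) (α₀ : ι), ∀ α, α₀ ≤ α →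
    @LE.le _ (instSubPre _ _).toLE b (hatEl X (obDual X) (x α)) ∧ @LE.le _ (instSubPre _ _).toLE (hatEl X (obDual X) (x α)) t

variable {X} in
/-- Bidual bounded uo-convergence. -/
def bbuoConvTo {ι : Type*} [Preorder ι] (x : ι → X) (l : X) : Prop :=
  uoConvTo x l ∧ HatEvOB x

/-- `X` has the `b`-property: every subset of `X` whose canonical image is
order bounded in `X~~` is order bounded in `X`. -/
def HasBProp : Prop :=
  ∀ A : Set X,
    (∃ b t : obDual ↥(obDual X), ∀ a ∈ A,
        @LE.le _ (instSubPre _ _).toLE b (hatEl X (obDual X) a) ∧ @LE.le _ (instSubPre _ _).toLE (hatEl X (obDual X) a) t) →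
    ∃ b t : X, ∀ a ∈ A, b ≤ a ∧ a ≤ t

/-- The Archimedean property for a lattice-ordered group. -/
def IsArch : Prop := ∀ x y : X, 0 ≤ x → (∀ n : ℕ, n • x ≤ y) → x = 0

end VL


/-- Membership in the `bbuo`-dual: `y(x_α) → 0` for every bbuo-null net. -/
def InBbuoDual {X : Type u} [Lattice X] [AddCommGroup X]
    [CovariantClass X X (· + ·) (· ≤ ·)] [Module ℝ X] [PosSMulMono ℝ X]
    (y : obDual X) : Prop :=
  ∀ (ι : Type u) [Preorder ι] [Nonempty ι] [IsDirected ι (· ≤ ·)] (x : ι → X),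
    uoConvTo x 0 → HatEvOB x →
    Filter.Tendsto (fun α => (y : X →ₗ[ℝ] ℝ) (x α)) Filter.atTop (nhds 0)


open scoped Pointwise

def HasGeneratingPositiveCone (E : Type*) [AddGroup E] [Preorder E] : Prop :=
  ∀ x : E, ∃ a b : E, 0 ≤ a ∧ 0 ≤ b ∧ x = a - b

def HasRieszDecomposition (E : Type*) [AddCommGroup E] [Preorder E] : Prop :=
  ∀ a b : E, 0 ≤ a → 0 ≤ b → Icc 0 (a + b) ⊆ Icc 0 a + Icc 0 b

section OrderedGroup

variable {E : Type*} [AddCommGroup E] [Preorder E] [AddLeftMono E]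

theorem Icc_zero_add_eq (hdec : HasRieszDecomposition E) {a b : E} (ha : 0 ≤ a)
    (hb : 0 ≤ b) : Icc 0 (a + b) = Icc 0 a + Icc 0 b := by
  refine (hdec a b ha hb).antisymm ?_
  rintro _ ⟨u, ⟨hu0, hua⟩, v, ⟨hv0, hvb⟩, rfl⟩
  exact ⟨add_nonneg hu0 hv0, add_le_add hua hvb⟩

theorem oConvTo_zero_of_nonneg_of_le {ι : Type*} [Preorder ι] {y : ι → E}
    (hy : ∀ α, 0 ≤ y α) {D : Set E} (hDne : D.Nonempty) (hDdir : DirectedOn (· ≥ ·) D)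
    (hD : IsGLB D 0) (h : ∀ d ∈ D, ∃ α₀, ∀ α, α₀ ≤ α → y α ≤ d) : OConvTo y 0 :=
  ⟨D, hDne, hDdir, hD, fun d hd => (h d hd).imp fun _ h' α hα =>
    ⟨by simpa using (neg_nonpos.mpr (hD.1 hd)).trans (hy α), by simpa using h' α hα⟩⟩

end OrderedGroup

section OrderedSpace

variable {E : Type*} [AddCommGroup E] [Preorder E] [Module ℝ E]

theorem obDual_nonneg_iff {φ : obDual E} :
    0 ≤ φ ↔ ∀ x : E, 0 ≤ x → 0 ≤ (φ : E →ₗ[ℝ] ℝ) x := by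
  simp [subPre_le_iff]

theorem Icc_zero_smul_eq [PosSMulMono ℝ E] {c : ℝ} (hc : 0 < c) (x : E) :
    Icc 0 (c • x) = c • Icc 0 x := by
  ext v
  rw [Set.mem_smul_set_iff_inv_smul_mem₀ hc.ne']
  constructor
  · rintro ⟨hv0, hvx⟩
    refine ⟨smul_nonneg (inv_nonneg.mpr hc.le) hv0, ?_⟩
    simpa [smul_smul, hc.ne'] using smul_le_smul_of_nonneg_left hvx (inv_nonneg.mpr hc.le)
  · rintro ⟨hv0, hvx⟩
    refine ⟨?_, ?_⟩
    · simpa [smul_smul, hc.ne'] using smul_nonneg hc.le hv0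
    · simpa [smul_smul, hc.ne'] using smul_le_smul_of_nonneg_left hvx hc.le

variable [AddLeftMono E]

theorem obDual_apply_mono {φ : obDual E} (hφ : 0 ≤ φ) {a b : E} (h : a ≤ b) :
    (φ : E →ₗ[ℝ] ℝ) a ≤ (φ : E →ₗ[ℝ] ℝ) b := by
  simpa using obDual_nonneg_iff.mp hφ _ (sub_nonneg.mpr h)

instance : AddLeftMono (obDual E) :=
  ⟨fun φ _ _ h x hx => by simpa using h x hx⟩

instance : PosSMulMono ℝ (obDual E) :=
  ⟨fun _ hc _ _ h x hx => by simpa using mul_le_mul_of_nonneg_left (h x hx) hc⟩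

theorem mem_obDual_of_nonneg {f : E →ₗ[ℝ] ℝ} (hf : ∀ x : E, 0 ≤ x → 0 ≤ f x) :
    f ∈ obDual E := by
  intro w
  refine ⟨f w, fun x h1 h2 => abs_le.mpr ⟨?_, ?_⟩⟩
  · have := hf _ (sub_nonneg.mpr h1)
    simp only [sub_neg_eq_add, map_add] at this
    linarith
  · have := hf _ (sub_nonneg.mpr h2)
    simp only [map_sub] at this
    linarith

theorem isLUB_image_Icc_zero {f : E →ₗ[ℝ] ℝ} (hf : f ∈ obDual E) {x : E} (hx : 0 ≤ x) :
    IsLUB (f '' Icc 0 x) (sSup (f '' Icc 0 x)) := by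
  obtain ⟨M, hM⟩ := hf x
  refine isLUB_csSup ⟨f 0, 0, ⟨le_rfl, hx⟩, rfl⟩ ⟨M, ?_⟩
  rintro _ ⟨v, ⟨hv0, hvx⟩, rfl⟩
  exact (le_abs_self _).trans (hM v ((neg_nonpos.mpr hx).trans hv0) hvx)

variable [PosSMulMono ℝ E]

theorem exists_linearMap_eq_of_nonneg (hgen : HasGeneratingPositiveCone E) (p : E → ℝ)
    (hadd : ∀ x y : E, 0 ≤ x → 0 ≤ y → p (x + y) = p x + p y)
    (hsmul : ∀ c : ℝ, 0 < c → ∀ x : E, 0 ≤ x → p (c • x) = c * p x) :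
    ∃ F : E →ₗ[ℝ] ℝ, ∀ x : E, 0 ≤ x → F x = p x := by
  have hp0 : p 0 = 0 := by simpa using hadd 0 0 le_rfl le_rfl
  choose A B hA hB hAB using hgen
  have hF : ∀ x a b : E, 0 ≤ a → 0 ≤ b → x = a - b → p (A x) - p (B x) = p a - p b := by
    intro x a b ha hb hx
    have h := congrArg p (sub_eq_sub_iff_add_eq_add.mp ((hAB x).symm.trans hx))
    rw [hadd _ _ (hA x) hb, hadd _ _ ha (hB x)] at h
    linarith
  have hneg : ∀ x : E, p (A (-x)) - p (B (-x)) = -(p (A x) - p (B x)) := fun x => by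
    rw [hF _ (B x) (A x) (hB x) (hA x) (by rw [← neg_sub, ← hAB x])]
    ring
  have hpos : ∀ c : ℝ, 0 ≤ c → ∀ x : E,
      p (A (c • x)) - p (B (c • x)) = c * (p (A x) - p (B x)) := by
    intro c hc x
    rcases hc.eq_or_lt with rfl | hc
    · simpa [hp0] using hF ((0 : ℝ) • x) 0 0 le_rfl le_rfl (by simp)
    · rw [hF _ (c • A x) (c • B x) (smul_nonneg hc.le (hA x)) (smul_nonneg hc.le (hB x))
        (by rw [← smul_sub, ← hAB x]), hsmul c hc _ (hA x), hsmul c hc _ (hB x)]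
      ring
  refine ⟨{ toFun := fun x => p (A x) - p (B x), map_add' := fun x y => ?_,
            map_smul' := fun c x => ?_ }, fun x hx => ?_⟩
  · rw [hF _ (A x + A y) (B x + B y) (add_nonneg (hA x) (hA y)) (add_nonneg (hB x) (hB y))
      (by rw [add_sub_add_comm, ← hAB x, ← hAB y]), hadd _ _ (hA x) (hA y),
      hadd _ _ (hB x) (hB y)]
    ring
  · simp only [RingHom.id_apply, smul_eq_mul]
    rcases le_total 0 c with hc | hc
    · exact hpos c hc x
    · have h := hpos (-c) (neg_nonneg.mpr hc) (-x)
      rw [neg_smul_neg, hneg] at h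
      linarith
  · simpa [hp0] using hF x x 0 hx le_rfl (sub_zero x).symm

theorem exists_obDual_isLUB_image_Icc_zero (hdec : HasRieszDecomposition E)
    (hgen : HasGeneratingPositiveCone E) {f : E →ₗ[ℝ] ℝ} (hf : f ∈ obDual E) :
    ∃ F ∈ obDual E, ∀ x : E, 0 ≤ x → IsLUB (f '' Icc 0 x) (F x) := by
  have hlub := fun x (hx : 0 ≤ x) => isLUB_image_Icc_zero hf hx
  obtain ⟨F, hF⟩ := exists_linearMap_eq_of_nonneg hgen (fun x => sSup (f '' Icc 0 x))
    (fun x y hx hy => (hlub _ (add_nonneg hx hy)).unique (by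
      rw [Icc_zero_add_eq hdec hx hy, image_add]
      exact (hlub x hx).add (hlub y hy)))
    (fun c hc x hx => (hlub _ (smul_nonneg hc.le hx)).unique (by
      rw [Icc_zero_smul_eq hc, image_smul_set]
      exact (hlub x hx).mul_left hc.le))
  refine ⟨F, mem_obDual_of_nonneg fun x hx => ?_, fun x hx => hF x hx ▸ hlub x hx⟩
  rw [hF x hx]
  simpa using (hlub x hx).1 ⟨0, ⟨le_rfl, hx⟩, rfl⟩

theorem exists_isLUB_pair_zero (hdec : HasRieszDecomposition E)
    (hgen : HasGeneratingPositiveCone E) (f : obDual E) :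
    ∃ F : obDual E, IsLUB {f, 0} F := by
  obtain ⟨F, hFmem, hF⟩ := exists_obDual_isLUB_image_Icc_zero hdec hgen f.2
  refine ⟨⟨F, hFmem⟩, ?_, fun G hG x hx => (hF x hx).2 ?_⟩
  · rintro g (rfl | rfl) x hx
    · exact (hF x hx).1 ⟨x, ⟨hx, le_rfl⟩, rfl⟩
    · simpa using (hF x hx).1 ⟨0, ⟨le_rfl, hx⟩, rfl⟩
  · rintro _ ⟨v, ⟨hv0, hvx⟩, rfl⟩
    exact (hG (mem_insert f _) v hv0).trans (obDual_apply_mono (hG (by simp)) hvx)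

theorem hasRieszDecomposition_obDual (hdec : HasRieszDecomposition E)
    (hgen : HasGeneratingPositiveCone E) : HasRieszDecomposition (obDual E) := by
  rintro φ₁ φ₂ h₁ h₂ ψ ⟨hψ0, hψ⟩
  obtain ⟨G, hG⟩ := exists_isLUB_pair_zero hdec hgen (ψ - φ₁)
  have hGψ : G ≤ ψ := hG.2 (by simpa [upperBounds_insert] using ⟨sub_le_self ψ h₁, hψ0⟩)
  have hGφ₂ : G ≤ φ₂ :=
    hG.2 (by simpa [upperBounds_insert] using ⟨sub_le_iff_le_add'.mpr hψ, h₂⟩)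
  exact ⟨ψ - G, ⟨sub_nonneg.mpr hGψ, sub_le_comm.mp (hG.1 (mem_insert _ _))⟩, G,
    ⟨hG.1 (by simp), hGφ₂⟩, sub_add_cancel ψ G⟩

theorem hasGeneratingPositiveCone_obDual (hdec : HasRieszDecomposition E)
    (hgen : HasGeneratingPositiveCone E) : HasGeneratingPositiveCone (obDual E) := by
  intro φ
  obtain ⟨G, hG⟩ := exists_isLUB_pair_zero hdec hgen φ
  exact ⟨G, G - φ, hG.1 (by simp), sub_nonneg.mpr (hG.1 (mem_insert _ _)),
    (sub_sub_cancel G φ).symm⟩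

end OrderedSpace

theorem posPart_smul_of_pos {X : Type*} [Lattice X] [AddCommGroup X] [Module ℝ X]
    [PosSMulMono ℝ X] {c : ℝ} (hc : 0 < c) (z : X) : (c • z)⁺ = c • z⁺ := by
  rw [posPart_def, posPart_def]
  conv_lhs => rw [← smul_zero c]
  exact ((OrderIso.smulRight hc).map_sup z 0).symm

section VectorLattice

variable {X : Type*} [Lattice X] [AddCommGroup X] [AddLeftMono X]

theorem hasRieszDecomposition_of_lattice : HasRieszDecomposition X := by
  rintro a b ha hb w ⟨hw0, hwab⟩
  refine ⟨w ⊓ a, ⟨le_inf hw0 ha, inf_le_right⟩, w - w ⊓ a,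
    ⟨sub_nonneg.mpr inf_le_left, ?_⟩, add_sub_cancel _ _⟩
  rw [sub_inf, sub_self]
  exact sup_le hb (sub_le_iff_le_add'.mpr hwab)

theorem hasGeneratingPositiveCone_of_lattice : HasGeneratingPositiveCone X :=
  fun x => ⟨x⁺, x⁻, posPart_nonneg x, negPart_nonneg x, (posPart_sub_negPart x).symm⟩

theorem posPart_add_le_add (a b : X) : (a + b)⁺ ≤ a⁺ + b⁺ :=
  sup_le (add_le_add (le_posPart a) (le_posPart b))
    (add_nonneg (posPart_nonneg a) (posPart_nonneg b))

theorem uoConvTo_zero_of_abs_le {ι : Type*} [Preorder ι] {x w : ι → X}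
    (hdom : ∀ α, |w α| ≤ |x α|) (hx : uoConvTo x 0) : uoConvTo w 0 := by
  intro u hu
  obtain ⟨D, hDne, hDdir, hD, hconv⟩ := hx u hu
  refine oConvTo_zero_of_nonneg_of_le (fun α => le_inf (abs_nonneg _) hu) hDne hDdir hD
    fun d hd => (hconv d hd).imp fun _ h α hα => ?_
  simpa using (inf_le_inf_right u (hdom α)).trans (by simpa using (h α hα).2)

variable [Module ℝ X]

theorem abs_apply_le_apply_abs {φ : obDual X} (hφ : 0 ≤ φ) (x : X) :
    |(φ : X →ₗ[ℝ] ℝ) x| ≤ (φ : X →ₗ[ℝ] ℝ) |x| :=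
  abs_le.mpr ⟨neg_le.mp (by simpa using obDual_apply_mono hφ (neg_le_abs x)),
    obDual_apply_mono hφ (le_abs_self x)⟩

variable [PosSMulMono ℝ X]

theorem hatEl_apply (Y : Submodule ℝ (X →ₗ[ℝ] ℝ)) (x : X) (φ : Y) :
    (hatEl X Y x : Y →ₗ[ℝ] ℝ) φ = (φ : X →ₗ[ℝ] ℝ) x :=
  rfl

theorem exists_obDual_apply_eq_apply_posPart {φ : obDual X} (hφ : 0 ≤ φ) (x : X) :
    ∃ ψ : obDual X, 0 ≤ ψ ∧ ψ ≤ φ ∧ (ψ : X →ₗ[ℝ] ℝ) x = (φ : X →ₗ[ℝ] ℝ) x⁺ := by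
  set N : X → ℝ := fun z => (φ : X →ₗ[ℝ] ℝ) z⁺
  have hN0 : ∀ z, 0 ≤ N z := fun z => obDual_nonneg_iff.mp hφ _ (posPart_nonneg z)
  have hNsmul : ∀ c : ℝ, 0 < c → ∀ z, N (c • z) = c * N z := fun c hc z => by
    simp only [N, posPart_smul_of_pos hc, map_smul, smul_eq_mul]
  have hNadd : ∀ z w, N (z + w) ≤ N z + N w := fun z w => by
    simpa only [N, map_add] using obDual_apply_mono hφ (posPart_add_le_add z w)
  -- Hahn–Banach: extend `c • x ↦ c * N x` to a linear `g ≤ N`.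
  let f₀ : X →ₗ.[ℝ] ℝ := LinearPMap.mkSpanSingleton' x (N x) fun c hcx => by
    rcases smul_eq_zero.mp hcx with rfl | rfl <;> simp [N]
  have hf₀ : ∀ z : f₀.domain, f₀ z ≤ N z := by
    rintro ⟨z, hz⟩
    obtain ⟨c, rfl⟩ := Submodule.mem_span_singleton.mp hz
    rw [LinearPMap.mkSpanSingleton'_apply, smul_eq_mul]
    rcases le_or_gt c 0 with hc | hc
    · exact (mul_nonpos_of_nonpos_of_nonneg hc (hN0 x)).trans (hN0 _)
    · exact (hNsmul c hc x).ge
  obtain ⟨g, hgx, hgN⟩ := exists_extension_of_le_sublinear f₀ N hNsmul hNadd hf₀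
  have hg : ∀ v, 0 ≤ v → 0 ≤ g v ∧ g v ≤ (φ : X →ₗ[ℝ] ℝ) v := fun v hv => by
    have h := hgN (-v)
    simp only [N, map_neg, posPart_eq_zero.mpr (neg_nonpos.mpr hv), map_zero] at h
    refine ⟨by linarith, ?_⟩
    simpa [N, posPart_eq_self.mpr hv] using hgN v
  refine ⟨⟨g, mem_obDual_of_nonneg fun v hv => (hg v hv).1⟩, fun v hv => ?_,
    fun v hv => (hg v hv).2, ?_⟩
  · simpa using (hg v hv).1
  · exact (hgx ⟨x, Submodule.mem_span_singleton_self x⟩).trans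
      (LinearPMap.mkSpanSingleton'_apply_self _ _ _ _)

theorem exists_bidual_apply_abs_le (b t : obDual (obDual X)) :
    ∃ T : obDual (obDual X), ∀ x : X,
      (∀ φ : obDual X, 0 ≤ φ → (b : obDual X →ₗ[ℝ] ℝ) φ ≤ (φ : X →ₗ[ℝ] ℝ) x) →
      (∀ φ : obDual X, 0 ≤ φ → (φ : X →ₗ[ℝ] ℝ) x ≤ (t : obDual X →ₗ[ℝ] ℝ) φ) →
      ∀ φ : obDual X, 0 ≤ φ → (φ : X →ₗ[ℝ] ℝ) |x| ≤ (T : obDual X →ₗ[ℝ] ℝ) φ := by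
  have hdec := hasRieszDecomposition_obDual (hasRieszDecomposition_of_lattice (X := X))
    hasGeneratingPositiveCone_of_lattice
  have hgen := hasGeneratingPositiveCone_obDual (hasRieszDecomposition_of_lattice (X := X))
    hasGeneratingPositiveCone_of_lattice
  obtain ⟨T₁, hT₁⟩ := exists_isLUB_pair_zero hdec hgen t
  obtain ⟨T₂, hT₂⟩ := exists_isLUB_pair_zero hdec hgen (-b)
  -- `T = t⁺ + (-b)⁺`, since `φ |x| = ψ₁ x + ψ₂ (-x)` for suitable `0 ≤ ψ₁, ψ₂ ≤ φ`.
  refine ⟨T₁ + T₂, fun x hb ht φ hφ => ?_⟩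
  obtain ⟨ψ₁, hψ₁0, hψ₁φ, hψ₁x⟩ := exists_obDual_apply_eq_apply_posPart hφ x
  obtain ⟨ψ₂, hψ₂0, hψ₂φ, hψ₂x⟩ := exists_obDual_apply_eq_apply_posPart hφ (-x)
  have h₁ : (ψ₁ : X →ₗ[ℝ] ℝ) x ≤ (T₁ : obDual X →ₗ[ℝ] ℝ) φ := calc
    (ψ₁ : X →ₗ[ℝ] ℝ) x ≤ (t : obDual X →ₗ[ℝ] ℝ) ψ₁ := ht ψ₁ hψ₁0
    _ ≤ (T₁ : obDual X →ₗ[ℝ] ℝ) ψ₁ := hT₁.1 (mem_insert _ _) ψ₁ hψ₁0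
    _ ≤ (T₁ : obDual X →ₗ[ℝ] ℝ) φ := obDual_apply_mono (hT₁.1 (by simp)) hψ₁φ
  have h₂ : (ψ₂ : X →ₗ[ℝ] ℝ) (-x) ≤ (T₂ : obDual X →ₗ[ℝ] ℝ) φ := calc
    (ψ₂ : X →ₗ[ℝ] ℝ) (-x) ≤ ((-b : obDual (obDual X)) : obDual X →ₗ[ℝ] ℝ) ψ₂ := by
      simpa using hb ψ₂ hψ₂0
    _ ≤ (T₂ : obDual X →ₗ[ℝ] ℝ) ψ₂ := hT₂.1 (mem_insert _ _) ψ₂ hψ₂0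
    _ ≤ (T₂ : obDual X →ₗ[ℝ] ℝ) φ := obDual_apply_mono (hT₂.1 (by simp)) hψ₂φ
  rw [← posPart_add_negPart, map_add, ← posPart_neg, ← hψ₁x, ← hψ₂x]
  simpa using add_le_add h₁ h₂

theorem HatEvOB.of_abs_le {ι : Type*} [Preorder ι] {x w : ι → X}
    (hdom : ∀ α, |w α| ≤ |x α|) (hx : HatEvOB x) : HatEvOB w := by
  obtain ⟨b, t, α₀, hbt⟩ := hx
  obtain ⟨T, hT⟩ := exists_bidual_apply_abs_le b t
  refine ⟨-T, T, α₀, fun α hα => ?_⟩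
  have h : ∀ φ : obDual X, 0 ≤ φ → |(φ : X →ₗ[ℝ] ℝ) (w α)| ≤ (T : obDual X →ₗ[ℝ] ℝ) φ :=
    fun φ hφ => (abs_apply_le_apply_abs hφ _).trans ((obDual_apply_mono hφ (hdom α)).trans
      (hT _ (hbt α hα).1 (hbt α hα).2 φ hφ))
  exact ⟨fun φ hφ => by simpa [hatEl_apply] using neg_le_of_abs_le (h φ hφ),
    fun φ hφ => le_of_abs_le (h φ hφ)⟩

end VectorLattice

theorem exists_mem_le_two_mul_of_le_sSup {S : Set ℝ} {r : ℝ} (hr : r ≤ sSup S)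
    (hne : S.Nonempty) (hnn : ∀ s ∈ S, 0 ≤ s) : ∃ s ∈ S, r ≤ 2 * s := by
  by_cases h : sSup S ≤ 0
  · obtain ⟨s, hs⟩ := hne
    exact ⟨s, hs, by linarith [hnn s hs]⟩
  · obtain ⟨s, hs, hlt⟩ := exists_lt_of_lt_csSup hne (half_lt_self (not_le.mp h))
    exact ⟨s, hs, by linarith⟩

section BbuoDual

variable {X : Type u} [Lattice X] [AddCommGroup X] [AddLeftMono X] [Module ℝ X]
  [PosSMulMono ℝ X]

theorem InBbuoDual.of_abs_le_sSup {f g : obDual X} (hf : InBbuoDual f)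
    (hfg : ∀ x : X, 0 ≤ x → ∀ z : X, |z| ≤ x → |(g : X →ₗ[ℝ] ℝ) z| ≤
      sSup ((fun w => |(f : X →ₗ[ℝ] ℝ) w|) '' {w : X | |w| ≤ x})) :
    InBbuoDual g := by
  intro ι _ _ _ x hxuo hxob
  have hw : ∀ α, ∃ w : X, |w| ≤ |x α| ∧
      |(g : X →ₗ[ℝ] ℝ) (x α)| ≤ 2 * |(f : X →ₗ[ℝ] ℝ) w| := fun α => by
    obtain ⟨_, ⟨w, hw, rfl⟩, h⟩ := exists_mem_le_two_mul_of_le_sSup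
      (hfg _ (abs_nonneg _) _ le_rfl) ⟨_, 0, by simp, rfl⟩
      (by rintro _ ⟨w, -, rfl⟩; exact abs_nonneg _)
    exact ⟨w, hw, h⟩
  choose w hwx hgw using hw
  have hfw := hf ι w (uoConvTo_zero_of_abs_le hwx hxuo) (hxob.of_abs_le hwx)
  exact squeeze_zero_norm (fun α => (Real.norm_eq_abs _).trans_le (hgw α))
    (by simpa using hfw.abs.const_mul 2)

theorem InBbuoDual.ordContE {f : obDual X} (hf : InBbuoDual f) :
    OrdContE (f : X →ₗ[ℝ] ℝ) := by
  intro D hDne hDdir hD ε hε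
  have : Nonempty (↥D)ᵒᵈ := hDne.to_subtype
  have : IsCodirectedOrder D := hDdir.isCodirectedOrder
  let x : (↥D)ᵒᵈ → X := fun d => ((OrderDual.ofDual d : D) : X)
  have hx0 : ∀ d, 0 ≤ x d := fun d => hD.1 (OrderDual.ofDual d).2
  have huo : uoConvTo x 0 := fun u hu =>
    oConvTo_zero_of_nonneg_of_le (fun d => le_inf (abs_nonneg _) hu) hDne hDdir hD
      fun d hd => ⟨OrderDual.toDual ⟨d, hd⟩, fun e he =>
        inf_le_left.trans (by rw [sub_zero, abs_of_nonneg (hx0 e)]; exact he)⟩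
  obtain ⟨d₀, hd₀⟩ := hDne
  have hob : HatEvOB x := ⟨0, hatEl X (obDual X) d₀, OrderDual.toDual ⟨d₀, hd₀⟩,
    fun e he => ⟨fun φ hφ => by simpa [hatEl_apply] using obDual_nonneg_iff.mp hφ _ (hx0 e),
      fun φ hφ => obDual_apply_mono hφ he⟩⟩
  obtain ⟨e₀, -, he₀⟩ :=
    (atTop_basis.tendsto_iff Metric.nhds_basis_ball).mp (hf _ x huo hob) ε hε
  refine ⟨_, (OrderDual.ofDual e₀).2, fun e he hle => ?_⟩
  have h := he₀ (OrderDual.toDual ⟨e, he⟩) hle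
  rwa [Metric.mem_ball, dist_zero_right, Real.norm_eq_abs] at h

end BbuoDual

theorem statement11_general {X : Type u} [Lattice X] [AddCommGroup X]
    [CovariantClass X X (· + ·) (· ≤ ·)] [Module ℝ X] [PosSMulMono ℝ X] :
    InBbuoDual (0 : obDual X)
    ∧ (∀ f g : obDual X, InBbuoDual f → InBbuoDual g → InBbuoDual (f + g))
    ∧ (∀ (c : ℝ) (f : obDual X), InBbuoDual f → InBbuoDual (c • f))
    ∧ (∀ f g : obDual X, InBbuoDual f →
        (∀ x : X, 0 ≤ x → ∀ z : X, |z| ≤ x →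
          |(g : X →ₗ[ℝ] ℝ) z| ≤
            sSup ((fun w => |(f : X →ₗ[ℝ] ℝ) w|) '' {w : X | |w| ≤ x})) →
        InBbuoDual g)
    ∧ (∀ f : obDual X, InBbuoDual f → OrdContE (f : X →ₗ[ℝ] ℝ)) :=
  ⟨fun _ _ _ _ _ _ _ => by simp,
    fun _ _ hf hg ι _ _ _ x hx hx' => by simpa using (hf ι x hx hx').add (hg ι x hx hx'),
    fun c _ hf ι _ _ _ x hx hx' => by simpa using (hf ι x hx hx').const_mul c,
    fun _ _ hf hfg => hf.of_abs_le_sSup hfg,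
    fun _ hf => hf.ordContE⟩

/-- The `bbuo`-dual is an order ideal of `X~` contained in the order continuous
dual `X~ₙ`: it contains `0`, is closed under addition and scalar multiplication,
is solid in `X~`, and consists of order continuous functionals. -/
theorem statement11 {X : Type u} [Lattice X] [AddCommGroup X]
    [CovariantClass X X (· + ·) (· ≤ ·)] [Module ℝ X] [PosSMulMono ℝ X]
    (harch : IsArch X)
    (hsep : SepPoints X) :
    InBbuoDual (0 : obDual X)
    ∧ (∀ f g : obDual X, InBbuoDual f → InBbuoDual g → InBbuoDual (f + g))
    ∧ (∀ (c : ℝ) (f : obDual X), InBbuoDual f → InBbuoDual (c • f))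
    ∧ (∀ f g : obDual X, InBbuoDual f →
        (∀ x : X, 0 ≤ x → ∀ z : X, |z| ≤ x →
          |(g : X →ₗ[ℝ] ℝ) z| ≤
            sSup ((fun w => |(f : X →ₗ[ℝ] ℝ) w|) '' {w : X | |w| ≤ x})) →
        InBbuoDual g)
    ∧ (∀ f : obDual X, InBbuoDual f → OrdContE (f : X →ₗ[ℝ] ℝ)) :=
  statement11_general
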